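/- For a disjoint union of stars each on k ≥ 2 vertices with n = mk total vertices, resilience is R(n,k,τ) = 1 - ((1-1/k)/(n-1))·[2 + τ(k-2)]·τ and efficiency is W(n,k,g) = ((1-1/k)/(n-1))·[2 + 2^{-g}(k-2)]; the resilience formula gives R = 1 at τ = 0 and R is strictly decreasing in τ on [0,1]. -/

import Mathlib

open scoped Classical

section AuxStars

/-- Distance-attenuated efficiency of a graph: pairs in different components contribute 0. -/
noncomputable def efficiency {V : Type*} [Fintype V] (G : SimpleGraph V) (g : ℝ) : ℝ :=
  (1 / ((Fintype.card V : ℝ) * ((Fintype.card V : ℝ) - 1))) *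
    ∑ u : V, ∑ v ∈ Finset.univ.erase u,
      (if G.Reachable u v then (((G.dist u v : ℝ)) ^ g)⁻¹ else 0)

/-- Disjoint union of `m` stars, each on `k` vertices, with centers `(i, 0)`. -/
def starsUnion (m k : ℕ) [NeZero k] : SimpleGraph (Fin m × Fin k) where
  Adj u v := u ≠ v ∧ u.1 = v.1 ∧ (u.2 = 0 ∨ v.2 = 0)
  symm := ⟨fun u v h => ⟨h.1.symm, h.2.1.symm, h.2.2.symm⟩⟩
  loopless := ⟨fun u h => h.1 rfl⟩

variable {m k : ℕ} [NeZero k]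

lemma su_reach_center (x : Fin m × Fin k) : (starsUnion m k).Reachable x (x.1, 0) := by
  by_cases hx : x.2 = 0
  · have : x = (x.1, 0) := Prod.ext rfl hx
    rw [← this]
  · exact SimpleGraph.Adj.reachable ⟨fun h => hx (congrArg Prod.snd h), rfl, Or.inr rfl⟩

lemma su_reach_iff (u v : Fin m × Fin k) : (starsUnion m k).Reachable u v ↔ u.1 = v.1 := by
  constructor
  · rintro ⟨w⟩
    induction w with
    | nil => rfl
    | cons h _ ih => exact h.2.1.trans ih
  · intro h
    refine (su_reach_center u).trans ?_
    rw [h]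
    exact (su_reach_center v).symm

lemma su_dist_one {u v : Fin m × Fin k} (hne : u ≠ v) (h1 : u.1 = v.1)
    (h0 : u.2 = 0 ∨ v.2 = 0) : (starsUnion m k).dist u v = 1 :=
  SimpleGraph.dist_eq_one_iff_adj.2 ⟨hne, h1, h0⟩

lemma su_dist_two {u v : Fin m × Fin k} (hne : u ≠ v) (h1 : u.1 = v.1)
    (hu : u.2 ≠ 0) (hv : v.2 ≠ 0) : (starsUnion m k).dist u v = 2 := by
  have hadj1 : (starsUnion m k).Adj u (u.1, 0) :=
    ⟨fun h => hu (congrArg Prod.snd h), rfl, Or.inr rfl⟩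
  have hadj2 : (starsUnion m k).Adj (u.1, 0) v := by
    refine ⟨fun h => hv ?_, h1, Or.inl rfl⟩
    · exact (congrArg Prod.snd h).symm
  have hle : (starsUnion m k).dist u v ≤ 2 := by
    have := SimpleGraph.dist_le ((hadj2.toWalk).cons hadj1)
    simpa [SimpleGraph.Walk.length_cons] using this
  have hpos : (starsUnion m k).dist u v ≠ 0 := by
    have : (starsUnion m k).Reachable u v := (su_reach_iff u v).2 h1
    have := (SimpleGraph.Reachable.pos_dist_of_ne this hne)
    omega
  have hne1 : (starsUnion m k).dist u v ≠ 1 := by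
    intro h
    exact (SimpleGraph.dist_eq_one_iff_adj.1 h).2.2.elim hu hv
  omega

lemma fin_sum_ite_zero (X Y : ℝ) :
    ∑ a : Fin k, (if a = 0 then X else Y) = X + ((k:ℝ)-1)*Y := by
  have h1 : ∀ a : Fin k, (if a = 0 then X else Y) = Y + (if a = 0 then X - Y else 0) := by
    intro a; split_ifs <;> ring
  simp only [h1, Finset.sum_add_distrib, Finset.sum_const, Finset.card_univ,
    Fintype.card_fin, Finset.sum_ite_eq' Finset.univ (0 : Fin k) (fun _ => X - Y),
    Finset.mem_univ, if_true, nsmul_eq_mul]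
  ring


lemma eff_sum (g : ℝ) (hk : 2 ≤ k)
    [inst : DecidableRel ((starsUnion m k).Reachable)] :
    ∑ u : Fin m × Fin k,
      ((∑ v : Fin m × Fin k,
        (if (starsUnion m k).Reachable u v then
          ((((starsUnion m k).dist u v : ℝ)) ^ g)⁻¹ else 0))
       - (if (starsUnion m k).Reachable u u then
          ((((starsUnion m k).dist u u : ℝ)) ^ g)⁻¹ else 0))
    = (m:ℝ) * (2*((k:ℝ)-1) + ((k:ℝ)-1)*((k:ℝ)-2)*(2:ℝ)^(-g)) := by
  set c : ℝ := (2:ℝ)^(-g) with hc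
  set D : ℝ := (((0:ℕ):ℝ) ^ g)⁻¹ with hD
  set f : Fin k → Fin k → ℝ := fun a b => if a = 0 ∨ b = 0 then 1 else c with hf
  have key : ∀ u v : Fin m × Fin k, u ≠ v →
      (if (starsUnion m k).Reachable u v then
        ((((starsUnion m k).dist u v : ℝ)) ^ g)⁻¹ else 0)
      = (if u.1 = v.1 then f u.2 v.2 else 0) := by
    intro u v hne
    by_cases h1 : u.1 = v.1
    · have hr : (starsUnion m k).Reachable u v := (su_reach_iff u v).2 h1
      rw [if_pos hr, if_pos h1]
      simp only [hf]
      by_cases h0 : u.2 = 0 ∨ v.2 = 0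
      · rw [su_dist_one hne h1 h0, if_pos h0]
        norm_num
      · push_neg at h0
        rw [su_dist_two hne h1 h0.1 h0.2, if_neg (by push_neg; exact h0)]
        rw [hc]
        rw [Real.rpow_neg (by norm_num : (0:ℝ) ≤ 2)]
        norm_num
    · rw [if_neg (fun hr => h1 ((su_reach_iff u v).1 hr)), if_neg h1]
  have keyd : ∀ u : Fin m × Fin k,
      (if (starsUnion m k).Reachable u u then
        ((((starsUnion m k).dist u u : ℝ)) ^ g)⁻¹ else 0) = D := by
    intro u
    rw [if_pos (SimpleGraph.Reachable.refl u), SimpleGraph.dist_self]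
  have key2 : ∀ u v : Fin m × Fin k,
      (if (starsUnion m k).Reachable u v then
        ((((starsUnion m k).dist u v : ℝ)) ^ g)⁻¹ else 0)
      = (if u.1 = v.1 then f u.2 v.2 else 0) + (if v = u then D - f u.2 u.2 else 0) := by
    intro u v
    by_cases huv : v = u
    · subst huv
      rw [keyd v, if_pos rfl, if_pos rfl]
      ring
    · rw [key u v (Ne.symm huv), if_neg huv, add_zero]
  have step1 : ∀ u : Fin m × Fin k,
      (∑ v : Fin m × Fin k,
        (if (starsUnion m k).Reachable u v then
          ((((starsUnion m k).dist u v : ℝ)) ^ g)⁻¹ else 0))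
      = (∑ v : Fin m × Fin k, (if u.1 = v.1 then f u.2 v.2 else 0)) + (D - f u.2 u.2) := by
    intro u
    rw [Finset.sum_congr rfl (fun v _ => key2 u v), Finset.sum_add_distrib,
      Finset.sum_ite_eq' Finset.univ u (fun _ => D - f u.2 u.2)]
    simp
  have hmain : ∀ u : Fin m × Fin k,
      ((∑ v : Fin m × Fin k,
        (if (starsUnion m k).Reachable u v then
          ((((starsUnion m k).dist u v : ℝ)) ^ g)⁻¹ else 0))
       - (if (starsUnion m k).Reachable u u then
          ((((starsUnion m k).dist u u : ℝ)) ^ g)⁻¹ else 0))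
      = (∑ v : Fin m × Fin k, (if u.1 = v.1 then f u.2 v.2 else 0)) - f u.2 u.2 := by
    intro u
    rw [step1 u, keyd u]
    ring
  rw [Finset.sum_congr rfl (fun u _ => hmain u), Finset.sum_sub_distrib]
  have hT : ∀ a : Fin k, ∑ b : Fin k, f a b = if a = 0 then (k:ℝ) else 1 + ((k:ℝ)-1)*c := by
    intro a
    by_cases ha : a = 0
    · rw [if_pos ha]
      simp [hf, ha]
    · rw [if_neg ha]
      have : ∀ b : Fin k, f a b = if b = 0 then (1:ℝ) else c := by
        intro b; simp [hf, ha]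
      rw [Finset.sum_congr rfl (fun b _ => this b), fin_sum_ite_zero]
  have hfull : (∑ u : Fin m × Fin k, ∑ v : Fin m × Fin k, (if u.1 = v.1 then f u.2 v.2 else 0))
      = (m:ℝ) * ((k:ℝ) + ((k:ℝ)-1)*(1 + ((k:ℝ)-1)*c)) := by
    rw [Fintype.sum_prod_type]
    have inner : ∀ (i : Fin m) (a : Fin k),
        (∑ v : Fin m × Fin k, (if (i,a).1 = v.1 then f (i,a).2 v.2 else 0))
        = ∑ b : Fin k, f a b := by
      intro i a
      rw [Fintype.sum_prod_type]
      rw [Finset.sum_eq_single i]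
      · simp
      · intro j _ hj
        simp [Ne.symm hj]
      · simp
    calc ∑ i : Fin m, ∑ a : Fin k, ∑ v : Fin m × Fin k, (if (i,a).1 = v.1 then f (i,a).2 v.2 else 0)
        = ∑ i : Fin m, ∑ a : Fin k, ∑ b : Fin k, f a b := by
          exact Finset.sum_congr rfl (fun i _ => Finset.sum_congr rfl (fun a _ => inner i a))
      _ = ∑ i : Fin m, ∑ a : Fin k, (if a = 0 then (k:ℝ) else 1 + ((k:ℝ)-1)*c) := by
          exact Finset.sum_congr rfl (fun i _ => Finset.sum_congr rfl (fun a _ => hT a))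
      _ = ∑ i : Fin m, ((k:ℝ) + ((k:ℝ)-1)*(1 + ((k:ℝ)-1)*c)) := by
          exact Finset.sum_congr rfl (fun i _ => fin_sum_ite_zero _ _)
      _ = (m:ℝ) * ((k:ℝ) + ((k:ℝ)-1)*(1 + ((k:ℝ)-1)*c)) := by
          rw [Finset.sum_const, Finset.card_univ, Fintype.card_fin, nsmul_eq_mul]; try ring
  have hdiag : (∑ u : Fin m × Fin k, f u.2 u.2) = (m:ℝ) * (1 + ((k:ℝ)-1)*c) := by
    rw [Fintype.sum_prod_type]
    have : ∀ a : Fin k, f a a = if a = 0 then (1:ℝ) else c := by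
      intro a; by_cases ha : a = 0 <;> simp [hf, ha]
    calc ∑ i : Fin m, ∑ a : Fin k, f a a
        = ∑ i : Fin m, (1 + ((k:ℝ)-1)*c) := by
          refine Finset.sum_congr rfl (fun i _ => ?_)
          rw [Finset.sum_congr rfl (fun a _ => this a), fin_sum_ite_zero]
      _ = (m:ℝ) * (1 + ((k:ℝ)-1)*c) := by rw [Finset.sum_const, Finset.card_univ, Fintype.card_fin, nsmul_eq_mul]; try ring
  rw [hfull, hdiag]
  ring

end AuxStars

/-- Resilience of the disjoint union of `m = n/k` stars of size `k`:
`R = 1 - (1/(n-1))·E[extent]`, where the seed is uniform over the `n` nodes, a center seed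
gives expected extent `(k-1)τ` and a leaf seed gives `τ(1+(k-2)τ)`. -/
theorem stmt_15 (m k n : ℕ) [NeZero k] (hm : 1 ≤ m) (hk : 2 ≤ k) (hn : n = m * k)
    (hn2 : 2 ≤ n) (g : ℝ) :
    (∀ τ : ℝ,
      1 - (1 / ((n:ℝ) - 1)) *
          ((1 / (n:ℝ)) *
            ((m:ℝ) * (((k:ℝ) - 1) * τ) + (m:ℝ) * ((k:ℝ) - 1) * (τ * (1 + ((k:ℝ) - 2) * τ))))
        = 1 - ((1 - 1/(k:ℝ)) / ((n:ℝ) - 1)) * (2 + τ * ((k:ℝ) - 2)) * τ) ∧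
    efficiency (starsUnion m k) g
      = ((1 - 1/(k:ℝ)) / ((n:ℝ) - 1)) * (2 + (2:ℝ) ^ (-g) * ((k:ℝ) - 2)) ∧
    1 - ((1 - 1/(k:ℝ)) / ((n:ℝ) - 1)) * (2 + (0:ℝ) * ((k:ℝ) - 2)) * 0 = 1 ∧
    StrictAntiOn
      (fun τ : ℝ => 1 - ((1 - 1/(k:ℝ)) / ((n:ℝ) - 1)) * (2 + τ * ((k:ℝ) - 2)) * τ)
      (Set.Icc (0:ℝ) 1) := by
  have hkR : (2:ℝ) ≤ (k:ℝ) := by exact_mod_cast hk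
  have hnR : (2:ℝ) ≤ (n:ℝ) := by exact_mod_cast hn2
  have hk0 : (k:ℝ) ≠ 0 := by positivity
  have hn0 : (n:ℝ) ≠ 0 := by positivity
  have hn1 : (n:ℝ) - 1 ≠ 0 := by nlinarith
  have hnk : (n:ℝ) = (m:ℝ) * (k:ℝ) := by exact_mod_cast hn
  refine ⟨?_, ?_, by ring, ?_⟩
  · intro τ
    rw [hnk]
    have hm0 : (m:ℝ) ≠ 0 := by positivity
    rw [hnk] at hn1
    field_simp
    ring
  · rw [efficiency]
    have hcard : (Fintype.card (Fin m × Fin k) : ℝ) = (n:ℝ) := by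
      rw [Fintype.card_prod, Fintype.card_fin, Fintype.card_fin]
      exact_mod_cast hn.symm
    rw [hcard]
    simp only [Finset.sum_erase_eq_sub (Finset.mem_univ _)]
    rw [eff_sum (m := m) (k := k) g hk
      (inst := @SimpleGraph.instDecidableRelReachable _ (starsUnion m k)
        (fun a b => Classical.propDecidable _) _ (fun a b => Classical.propDecidable _)), hnk]
    rw [hnk] at hn1
    have hm0 : (m:ℝ) ≠ 0 := by positivity
    field_simp
  · intro a ha b hb hab
    simp only
    have hc : 0 < (1 - 1/(k:ℝ)) / ((n:ℝ) - 1) := by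
      apply div_pos
      · have : 1/(k:ℝ) ≤ 1/2 := by
          apply one_div_le_one_div_of_le <;> linarith
        linarith
      · linarith
    have ha0 : (0:ℝ) ≤ a := ha.1
    have hb1 : b ≤ 1 := hb.2
    have hkey : (2 + a * ((k:ℝ) - 2)) * a < (2 + b * ((k:ℝ) - 2)) * b := by
      nlinarith [mul_nonneg (mul_nonneg (sub_nonneg.2 hab.le) (by linarith : (0:ℝ) ≤ a+b))
        (by linarith : (0:ℝ) ≤ (k:ℝ)-2)]
    nlinarith [mul_lt_mul_of_pos_left hkey hc]
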